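/- arXiv:2212.02345 — 2 statements merged into one kernel-verified Lean document; each statement's English description precedes it below -/
import Mathlib

section
/- For a cycle c in a based chain complex with an n-reduced algebraic gradient V, performing a single pass over the basis elements in increasing filtration order and, whenever the current coefficient c_i is nonzero and σ_i is a gradient facet with pair (σ_i, σ_j) ∈ V, replacing c by c − (c_i / D_{i,j})·D_j (where D is the filtration boundary matrix), computes exactly Φ(c), the image of c under the flow of V. -/
open Classical Finset

noncomputable section

variable {𝕜 : Type} [Field 𝕜] {l : ℕ}

/-- The support of a coordinate vector: the set of basis indices with nonzero coefficient. -/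
def vsupp (c : Fin l → 𝕜) : Finset (Fin l) :=
  Finset.univ.filter (fun i => c i ≠ 0)

/-- The pivot of a coordinate vector: the maximal index of its support (`⊥` if zero). -/
def vpivot (c : Fin l → 𝕜) : WithBot (Fin l) := (vsupp c).max

/-- The lexicographic order on finite subsets of a totally ordered set. -/
def finsetLexLe {α : Type*} [LinearOrder α] (A B : Finset α) : Prop :=
  A = B ∨ ∃ h : ((A \ B) ∪ (B \ A)).Nonempty, ((A \ B) ∪ (B \ A)).max' h ∈ B

/-- The lexicographic preorder on chains, comparing supports lexicographically. -/
def chainLexLe (c₁ c₂ : Fin l → 𝕜) : Prop := finsetLexLe (vsupp c₁) (vsupp c₂)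

/-- The strict lexicographic preorder on chains. -/
def chainLexLt (c₁ c₂ : Fin l → 𝕜) : Prop :=
  chainLexLe c₁ c₂ ∧ vsupp c₁ ≠ vsupp c₂

/-- A basis element is critical if it is contained in no pair of `V`. -/
def CriticalIn {l : ℕ} (V : Finset (Fin l × Fin l)) (a : Fin l) : Prop :=
  ∀ p ∈ V, p.1 ≠ a ∧ p.2 ≠ a

/-- A based chain complex with an elementwise filtration: the basis elements are
`σ_1 < … < σ_l` (indexed by `Fin l`), `deg` records their homological degree, and `D` is the
filtration boundary matrix (the column `D _ j` represents `∂σ_j`).  Monotonicity `filt`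
expresses that the down sets of the filtration order span subcomplexes, `homog` that the
boundary map decreases degree by one, and `dd` that `∂ ∘ ∂ = 0`. -/
structure BasedChainComplex (𝕜 : Type) [Field 𝕜] (l : ℕ) where
  deg : Fin l → ℕ
  D : Matrix (Fin l) (Fin l) 𝕜
  homog : ∀ i j, D i j ≠ 0 → deg i + 1 = deg j
  filt : ∀ i j, D i j ≠ 0 → i < j
  dd : D * D = 0

namespace BasedChainComplex

variable (C : BasedChainComplex 𝕜 l)

/-- `σ_i` is a facet of `σ_j` if `⟨∂σ_j, σ_i⟩ ≠ 0`. -/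
def IsFacet (i j : Fin l) : Prop := C.D i j ≠ 0

/-- An algebraic gradient: a disjoint collection `V` of facet pairs arising from an
algebraic Morse function, i.e. a monotonic function `f` on the basis such that a facet
pair `(μ, η)` satisfies `f μ = f η` iff `(μ, η) ∈ V`. -/
def IsAlgGradient (V : Finset (Fin l × Fin l)) : Prop :=
  (∀ p ∈ V, C.IsFacet p.1 p.2) ∧
  (∀ p ∈ V, ∀ q ∈ V, p ≠ q → p.1 ≠ q.1 ∧ p.1 ≠ q.2 ∧ p.2 ≠ q.1 ∧ p.2 ≠ q.2) ∧
  (∃ f : Fin l → ℝ, (∀ i j, C.IsFacet i j → f i ≤ f j) ∧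
    (∀ i j, C.IsFacet i j → (f i = f j ↔ (i, j) ∈ V)))

/-- The chain homotopy `F` of an algebraic gradient `V`: the linear map with
`F σ = −⟨∂τ, σ⟩⁻¹ · τ` if `(σ, τ) ∈ V` and `F σ = 0` otherwise. -/
def Fmap (V : Finset (Fin l × Fin l)) (c : Fin l → 𝕜) : Fin l → 𝕜 :=
  fun j => ∑ i, (if (i, j) ∈ V then -(C.D i j)⁻¹ else 0) * c i

/-- The flow of an algebraic gradient `V`: `Φ(c) = c + ∂F(c) + F(∂c)`. -/
def flow (V : Finset (Fin l × Fin l)) (c : Fin l → 𝕜) : Fin l → 𝕜 :=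
  c + C.D.mulVec (C.Fmap V c) + C.Fmap V (C.D.mulVec c)

/-- A cycle of degree `n`: a chain with `∂z = 0` supported in degree `n`. -/
def IsCycle (n : ℕ) (z : Fin l → 𝕜) : Prop :=
  C.D.mulVec z = 0 ∧ ∀ i, z i ≠ 0 → C.deg i = n

/-- `V` is `n`-reduced: for every pair `(a, b) ∈ V` with `a` of degree `n`,
the pivot of `∂b` equals `a`. -/
def NReduced (V : Finset (Fin l × Fin l)) (n : ℕ) : Prop :=
  ∀ p ∈ V, C.deg p.1 = n → vpivot (fun i => C.D i p.2) = (p.1 : WithBot (Fin l))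

/-- `V` generates the `n`-boundaries: the gradient cofacet boundaries
`{∂b : (a,b) ∈ V, deg a = n}` span the space of boundaries of degree `n`. -/
def GeneratesBoundaries (V : Finset (Fin l × Fin l)) (n : ℕ) : Prop :=
  ∀ e : Fin l → 𝕜, (∀ i, e i ≠ 0 → C.deg i = n + 1) →
    C.D.mulVec e ∈ Submodule.span 𝕜
      {x : Fin l → 𝕜 | ∃ p ∈ V, C.deg p.1 = n ∧ x = fun i => C.D i p.2}

/-- A chain is lexicographically minimal if no homologous chain is strictly smaller
in the lexicographic preorder. -/
def LexMinimal (z : Fin l → 𝕜) : Prop :=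
  ∀ e : Fin l → 𝕜, ¬ chainLexLt (z + C.D.mulVec e) z

end BasedChainComplex

end

namespace BasedChainComplex

open Classical in
/-- One step of the gradient flow reduction pass: if the current coefficient `c i` is
nonzero and `σ_i` is a gradient facet with pair `(σ_i, σ_j) ∈ V`, replace `c` by
`c − (c_i / D_{i,j}) · D_j`; otherwise leave `c` unchanged. -/
noncomputable def passStep {𝕜 : Type} [Field 𝕜] {l : ℕ} (C : BasedChainComplex 𝕜 l)
    (V : Finset (Fin l × Fin l)) (c : Fin l → 𝕜) (i : Fin l) : Fin l → 𝕜 :=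
  if h : c i ≠ 0 ∧ ∃ j, (i, j) ∈ V then
    c + fun k => -(c i) / C.D i h.2.choose * C.D k h.2.choose
  else c

end BasedChainComplex

open Classical in
/-- The elimination vector added at step `i`. -/
noncomputable def gstep {𝕜 : Type} [Field 𝕜] {l : ℕ} (C : BasedChainComplex 𝕜 l)
    (V : Finset (Fin l × Fin l)) (c : Fin l → 𝕜) (i : Fin l) : Fin l → 𝕜 :=
  if h : c i ≠ 0 ∧ ∃ j, (i, j) ∈ V then
    (fun k => -(c i) / C.D i h.2.choose * C.D k h.2.choose)
  else 0

lemma passStep_eq_gstep {𝕜 : Type} [Field 𝕜] {l : ℕ} (C : BasedChainComplex 𝕜 l)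
    (V : Finset (Fin l × Fin l)) (c : Fin l → 𝕜) (c' : Fin l → 𝕜) (i : Fin l)
    (hci : c' i = c i) : C.passStep V c' i = c' + gstep C V c i := by
  unfold BasedChainComplex.passStep gstep
  by_cases h : c i ≠ 0 ∧ ∃ j, (i, j) ∈ V
  · rw [dif_pos h, dif_pos (by rw [hci]; exact h)]
    simp only [hci]
  · rw [dif_neg h, dif_neg (by rw [hci]; exact h), add_zero]

lemma fold_aux {𝕜 : Type} [Field 𝕜] {l : ℕ} (C : BasedChainComplex 𝕜 l)
    (V : Finset (Fin l × Fin l)) (c : Fin l → 𝕜)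
    (hg : ∀ i k : Fin l, i < k → gstep C V c i k = 0) :
    ∀ L : List (Fin l), L.Pairwise (· < ·) → ∀ c' : Fin l → 𝕜,
      (∀ k ∈ L, c' k = c k) →
      L.foldl (C.passStep V) c' = c' + (L.map (gstep C V c)).sum := by
  intro L
  induction L with
  | nil => intro _ c' _; simp
  | cons a L ih =>
    intro hp c' hc'
    have ha : c' a = c a := hc' a (by simp)
    have hp' := (List.pairwise_cons.mp hp)
    have step : C.passStep V c' a = c' + gstep C V c a :=
      passStep_eq_gstep C V c c' a ha
    have hnext : ∀ k ∈ L, (c' + gstep C V c a) k = c k := by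
      intro k hk
      have hak : a < k := hp'.1 k hk
      have : gstep C V c a k = 0 := hg a k hak
      simp [this, hc' k (List.mem_cons_of_mem _ hk)]
    calc (a :: L).foldl (C.passStep V) c'
        = L.foldl (C.passStep V) (c' + gstep C V c a) := by
          simp [List.foldl_cons, step]
      _ = (c' + gstep C V c a) + (L.map (gstep C V c)).sum :=
          ih hp'.2 _ hnext
      _ = c' + ((a :: L).map (gstep C V c)).sum := by
          simp [add_assoc]

/-- Gradient flow reduction as matrix reduction: for a cycle `c` and an `n`-reduced
algebraic gradient `V`, a single pass over the basis elements in increasing filtration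
order, applying the elimination step at every gradient facet with nonzero coefficient,
computes exactly the flow `Φ(c)`. -/
theorem stmt18 {𝕜 : Type} [Field 𝕜] {l : ℕ} (C : BasedChainComplex 𝕜 l)
    (V : Finset (Fin l × Fin l)) (hV : C.IsAlgGradient V)
    (n : ℕ) (hred : C.NReduced V n)
    (c : Fin l → 𝕜) (hc : C.IsCycle n c) :
    (List.finRange l).foldl (C.passStep V) c = C.flow V c := by
  classical
  -- uniqueness of the partner of i in V
  have huniq : ∀ i j j' : Fin l, (i, j) ∈ V → (i, j') ∈ V → j = j' := by
    intro i j j' hj hj'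
    by_contra hne
    have hpq : ((i, j) : Fin l × Fin l) ≠ (i, j') := by
      simp [Prod.ext_iff, hne]
    exact (hV.2.1 _ hj _ hj' hpq).1 rfl
  -- support bound from n-reducedness
  have hg : ∀ i k : Fin l, i < k → gstep C V c i k = 0 := by
    intro i k hik
    unfold gstep
    by_cases h : c i ≠ 0 ∧ ∃ j, (i, j) ∈ V
    · rw [dif_pos h]
      have hmem : (i, h.2.choose) ∈ V := h.2.choose_spec
      have hdeg : C.deg i = n := hc.2 i h.1
      have hpiv := hred _ hmem hdeg
      have hDk : C.D k h.2.choose = 0 := by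
        by_contra hDk
        have hkmem : k ∈ vsupp (fun m => C.D m h.2.choose) := by
          simp [vsupp, hDk]
        have := Finset.le_max hkmem
        rw [show (vsupp fun m => C.D m h.2.choose).max
            = vpivot (fun m => C.D m h.2.choose) from rfl, hpiv] at this
        exact absurd (WithBot.coe_le_coe.mp this) (not_le.mpr hik)
      simp [hDk]
    · rw [dif_neg h]; rfl
  have hfold := fold_aux C V c hg (List.finRange l)
    (List.pairwise_lt_finRange l) c (fun _ _ => rfl)
  rw [hfold]
  have hsum : ((List.finRange l).map (gstep C V c)).sum = ∑ i, gstep C V c i :=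
    (Fin.sum_univ_def _).symm
  rw [hsum]
  -- compute the flow
  have hF0 : C.Fmap V (C.D.mulVec c) = 0 := by
    rw [hc.1]
    funext j
    simp [BasedChainComplex.Fmap]
  unfold BasedChainComplex.flow
  rw [hF0, add_zero]
  congr 1
  funext k
  show (∑ i, gstep C V c i) k = C.D.mulVec (C.Fmap V c) k
  have hmv : C.D.mulVec (C.Fmap V c) k
      = ∑ j, ∑ i, C.D k j * ((if (i, j) ∈ V then -(C.D i j)⁻¹ else 0) * c i) := by
    simp [Matrix.mulVec, dotProduct, BasedChainComplex.Fmap, Finset.mul_sum]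
  rw [hmv, Finset.sum_comm]
  rw [show (∑ i, gstep C V c i) k = ∑ i, gstep C V c i k from by
    simp [Finset.sum_apply]]
  apply Finset.sum_congr rfl
  intro i _
  unfold gstep
  by_cases h : c i ≠ 0 ∧ ∃ j, (i, j) ∈ V
  · rw [dif_pos h]
    set j₀ := h.2.choose with hj₀
    have hmem : (i, j₀) ∈ V := h.2.choose_spec
    rw [Finset.sum_eq_single j₀]
    · rw [if_pos hmem]
      field_simp
    · intro j _ hjne
      have : (i, j) ∉ V := fun hmem' => hjne (huniq i j j₀ hmem' hmem)
      simp [this]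
    · intro habs; exact absurd (Finset.mem_univ j₀) habs
  · rw [dif_neg h]
    push_neg at h
    by_cases hci : c i = 0
    · simp [hci]
    · have hnoj : ∀ j, (i, j) ∉ V := h hci
      simp [hnoj]
end

section
/- The exhaustive reduction procedure applied to a cycle c — repeatedly, while some coefficient c_i is nonzero with σ_i a gradient facet paired as (σ_i, σ_j) ∈ V, replacing c by c − (c_i/D_{i,j})·D_j — terminates and computes the stabilized flow Φ^∞(c): the unique Φ-invariant cycle that is V-homologous to c. -/
open Classical Finset

namespace BasedChainComplex

/-- One step of the exhaustive reduction: pick any index `i` with `c i ≠ 0` and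
`(σ_i, σ_j) ∈ V`, and replace `c` by `c − (c_i / D_{i,j}) · D_j`. -/
def redStep {𝕜 : Type} [Field 𝕜] {l : ℕ} (C : BasedChainComplex 𝕜 l)
    (V : Finset (Fin l × Fin l)) (c c' : Fin l → 𝕜) : Prop :=
  ∃ p ∈ V, c p.1 ≠ 0 ∧ c' = c + fun k => -(c p.1) / C.D p.1 p.2 * C.D k p.2

end BasedChainComplex

/-!
Let `f` be a Morse function of `V`. A reduction step at `(a, b) ∈ V` clears the coefficient of
`σ_a` and changes only coefficients of facets of `σ_b`, all of strictly smaller `f`-value than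
`σ_a`; hence supports decrease colexicographically (basis elements ordered by `f`, ties broken
by index) and the procedure terminates. Both the reduction and the flow `Φ` change a cycle only
by elements of `W = span {∂b : (a, b) ∈ V}`, and a Φ-invariant cycle has no gradient facet.
Uniqueness follows from the triangularity of `W` against the gradient facets: if `∑ t_p ∂(p.2)`
vanishes at every `p.1`, look at the pair `q` with `t_q ≠ 0` of largest `f`-value; the
coefficient at `q.1` is `t_q ⟨∂q.2, q.1⟩ ≠ 0`.
-/

namespace BasedChainComplex

open scoped Matrix

variable {𝕜 : Type} [Field 𝕜] {l : ℕ} (C : BasedChainComplex 𝕜 l) {V : Finset (Fin l × Fin l)}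

/-- The `V`-homologous chains of `c` are those in `c + C.gradientSpan V`. -/
def gradientSpan (V : Finset (Fin l × Fin l)) : Submodule 𝕜 (Fin l → 𝕜) :=
  Submodule.span 𝕜 {x : Fin l → 𝕜 | ∃ p ∈ V, x = fun i => C.D i p.2}

variable {C}

theorem mem_gradientSpan_iff {x : Fin l → 𝕜} :
    x ∈ C.gradientSpan V ↔
      ∃ t : Fin l × Fin l → 𝕜, ∑ p ∈ V, t p • (fun i => C.D i p.2) = x := by
  have hset : {x : Fin l → 𝕜 | ∃ p ∈ V, x = fun i => C.D i p.2} =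
      (fun p : Fin l × Fin l => fun i => C.D i p.2) '' ↑V := by
    ext x
    simp [eq_comm]
  rw [gradientSpan, hset, Submodule.mem_span_image_finset_iff_exists_fun']

theorem mulVec_eq_zero_of_mem_gradientSpan {x : Fin l → 𝕜} (hx : x ∈ C.gradientSpan V) :
    C.D *ᵥ x = 0 := by
  have hle : C.gradientSpan V ≤ LinearMap.ker C.D.mulVecLin := by
    refine Submodule.span_le.2 ?_
    rintro _ ⟨p, -, rfl⟩
    ext k
    exact congrFun (congrFun C.dd k) p.2
  exact hle hx

theorem mulVec_eq_zero_of_sub_mem_gradientSpan {c x : Fin l → 𝕜} (hc : C.D *ᵥ c = 0)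
    (hx : x - c ∈ C.gradientSpan V) : C.D *ᵥ x = 0 := by
  rw [← sub_add_cancel x c, Matrix.mulVec_add, hc, mulVec_eq_zero_of_mem_gradientSpan hx, add_zero]

theorem mulVec_Fmap (z : Fin l → 𝕜) :
    C.D *ᵥ C.Fmap V z = ∑ p ∈ V, (-(C.D p.1 p.2)⁻¹ * z p.1) • fun i => C.D i p.2 := by
  ext k
  simp only [Matrix.mulVec, dotProduct, Fmap, Finset.sum_apply, Pi.smul_apply, smul_eq_mul,
    Finset.mul_sum]
  rw [Finset.sum_comm, ← Finset.sum_product', Finset.univ_product_univ,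
    ← Finset.sum_subset (Finset.subset_univ V) fun p _ hp => by simp [hp]]
  refine Finset.sum_congr rfl fun p hp => ?_
  rw [if_pos hp]
  ring

theorem Fmap_eq_zero {z : Fin l → 𝕜} (hz : ∀ p ∈ V, z p.1 = 0) : C.Fmap V z = 0 := by
  ext j
  refine Finset.sum_eq_zero fun i _ => ?_
  split_ifs with h
  · rw [hz _ h, mul_zero]
  · rw [zero_mul]

theorem Fmap_zero : C.Fmap V 0 = 0 :=
  Fmap_eq_zero fun _ _ => rfl

theorem flow_sub_self_mem_gradientSpan {z : Fin l → 𝕜} (hz : C.D *ᵥ z = 0) :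
    C.flow V z - z ∈ C.gradientSpan V := by
  have : C.flow V z - z = C.D *ᵥ C.Fmap V z := by
    rw [flow, hz, Fmap_zero]
    abel
  rw [this, mulVec_Fmap]
  exact Submodule.sum_mem _ fun p hp => Submodule.smul_mem _ _ (Submodule.subset_span ⟨p, hp, rfl⟩)

theorem flow_eq_self {z : Fin l → 𝕜} (hz : C.D *ᵥ z = 0) (hzV : ∀ p ∈ V, z p.1 = 0) :
    C.flow V z = z := by
  rw [flow, hz, Fmap_eq_zero hzV, Fmap_zero, Matrix.mulVec_zero, add_zero,
    add_zero]

theorem iterate_flow_sub_mem_gradientSpan {c : Fin l → 𝕜} (hc : C.D *ᵥ c = 0) (s : ℕ) :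
    (C.flow V)^[s] c - c ∈ C.gradientSpan V := by
  induction s with
  | zero => simp
  | succ s ih =>
    rw [Function.iterate_succ_apply', ← sub_add_sub_cancel _ ((C.flow V)^[s] c)]
    exact add_mem (flow_sub_self_mem_gradientSpan (mulVec_eq_zero_of_sub_mem_gradientSpan hc ih)) ih

theorem sub_mem_gradientSpan_of_reflTransGen {c c' : Fin l → 𝕜}
    (h : Relation.ReflTransGen (C.redStep V) c c') : c' - c ∈ C.gradientSpan V := by
  induction h with
  | refl => simp
  | tail _ hstep ih =>
    obtain ⟨p, hp, -, rfl⟩ := hstep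
    rw [add_sub_right_comm]
    exact add_mem ih (Submodule.smul_mem _ _ (Submodule.subset_span ⟨p, hp, rfl⟩))

namespace IsAlgGradient

theorem eq_of_fst_eq (hV : C.IsAlgGradient V) {p q : Fin l × Fin l} (hp : p ∈ V) (hq : q ∈ V)
    (h : p.1 = q.1) : p = q := by
  by_contra hpq
  exact (hV.2.1 p hp q hq hpq).1 h

theorem eq_of_snd_eq (hV : C.IsAlgGradient V) {p q : Fin l × Fin l} (hp : p ∈ V) (hq : q ∈ V)
    (h : p.2 = q.2) : p = q := by
  by_contra hpq
  exact (hV.2.1 p hp q hq hpq).2.2.2 h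

theorem exists_morseFunction (hV : C.IsAlgGradient V) : ∃ f : Fin l → ℝ,
    (∀ p ∈ V, f p.1 = f p.2) ∧ ∀ i j, C.D i j ≠ 0 → (i, j) ∉ V → f i < f j := by
  obtain ⟨hfacet, -, f, hmono, hV⟩ := hV
  refine ⟨f, fun p hp => (hV _ _ (hfacet p hp)).2 hp, fun i j hD hij => ?_⟩
  exact (hmono i j hD).lt_of_ne fun h => hij ((hV i j hD).1 h)

theorem eq_zero_of_sum_apply_fst_eq_zero (hV : C.IsAlgGradient V) (t : Fin l × Fin l → 𝕜)
    (h : ∀ q ∈ V, (∑ p ∈ V, t p • fun i => C.D i p.2) q.1 = 0) : ∀ p ∈ V, t p = 0 := by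
  obtain ⟨f, hfV, hflt⟩ := hV.exists_morseFunction
  by_contra! hne
  obtain ⟨q, hq, hmax⟩ := (V.filter (t · ≠ 0)).exists_max_image (fun p => f p.2)
    (by simpa [Finset.filter_nonempty_iff] using hne)
  rw [Finset.mem_filter] at hq
  have hdiag : (∑ p ∈ V, t p • fun i => C.D i p.2) q.1 = t q * C.D q.1 q.2 := by
    rw [Finset.sum_apply]
    refine Finset.sum_eq_single q (fun p hp hpq => ?_) (absurd hq.1)
    by_contra! hne
    obtain ⟨htp, hD⟩ := mul_ne_zero_iff.1 hne
    have hnot : (q.1, p.2) ∉ V := fun hm => by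
      have hq' := hV.eq_of_fst_eq hm hq.1 rfl
      exact hpq (hV.eq_of_snd_eq hp hq.1 (by rw [← hq']))
    have := hmax p (Finset.mem_filter.2 ⟨hp, htp⟩)
    linarith [hflt _ _ hD hnot, hfV q hq.1]
  exact mul_ne_zero hq.2 (hV.1 q hq.1) (hdiag ▸ h q hq.1)

theorem eq_of_sub_mem_gradientSpan (hV : C.IsAlgGradient V) {x y : Fin l → 𝕜}
    (hxV : ∀ p ∈ V, x p.1 = 0) (hyV : ∀ p ∈ V, y p.1 = 0) (h : x - y ∈ C.gradientSpan V) :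
    x = y := by
  obtain ⟨t, ht⟩ := mem_gradientSpan_iff.1 h
  have ht0 := hV.eq_zero_of_sum_apply_fst_eq_zero t fun q hq => by
    rw [ht, Pi.sub_apply, hxV q hq, hyV q hq, sub_zero]
  rw [← sub_eq_zero, ← ht]
  exact Finset.sum_eq_zero fun p hp => by rw [ht0 p hp, zero_smul]

theorem apply_fst_eq_zero_of_flow_eq_self (hV : C.IsAlgGradient V) {z : Fin l → 𝕜}
    (hz : C.D *ᵥ z = 0) (hfix : C.flow V z = z) : ∀ p ∈ V, z p.1 = 0 := by
  have hDF : C.D *ᵥ C.Fmap V z = 0 := by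
    rwa [flow, hz, Fmap_zero, add_zero, add_eq_left] at hfix
  rw [mulVec_Fmap] at hDF
  intro p hp
  have := hV.eq_zero_of_sum_apply_fst_eq_zero _ (fun q _ => by rw [hDF]; rfl) p hp
  exact (mul_eq_zero.1 this).resolve_left (neg_ne_zero.2 (inv_ne_zero (hV.1 p hp)))

theorem wellFounded_flip_redStep (hV : C.IsAlgGradient V) :
    WellFounded (flip (C.redStep V)) := by
  obtain ⟨f, hfV, hflt⟩ := hV.exists_morseFunction
  let g : Fin l ↪ Lex (ℝ × Fin l) :=
    ⟨fun i => toLex (f i, i), fun i j h => congrArg (fun x => (ofLex x).2) h⟩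
  let key : Finset (Fin l) → Colex (Finset (Lex (ℝ × Fin l))) := fun s => toColex (s.map g)
  have hkey : WellFounded (Function.onFun (· < ·) key) :=
    Set.wellFoundedOn_range.1 (Set.finite_range key).wellFoundedOn
  refine Subrelation.wf (r := InvImage (Function.onFun (· < ·) key) vsupp) ?_ (InvImage.wf _ hkey)
  rintro c' c ⟨p, hp, hcp, rfl⟩
  have hc'p : (c + fun k => -(c p.1) / C.D p.1 p.2 * C.D k p.2) p.1 = 0 := by
    simp [div_mul_cancel₀ _ (hV.1 p hp : C.D p.1 p.2 ≠ 0)]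
  simp only [Function.onFun, InvImage, key, Finset.Colex.toColex_lt_toColex_iff_exists_forall_lt]
  refine ⟨g p.1, Finset.mem_map_of_mem g (by simpa [vsupp] using hcp), ?_, ?_⟩
  · simpa [Finset.mem_map', vsupp] using hc'p
  · intro _ hb hnb
    obtain ⟨i, hi, rfl⟩ := Finset.mem_map.1 hb
    rw [Finset.mem_map'] at hnb
    have hip : i ≠ p.1 := by
      rintro rfl
      exact (Finset.mem_filter.1 hi).2 hc'p
    simp only [vsupp, Finset.mem_filter, Finset.mem_univ, true_and, not_not, Pi.add_apply] at hi hnb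
    have hD : C.D i p.2 ≠ 0 := fun h => hi (by rw [hnb, h]; ring)
    have hnot : (i, p.2) ∉ V := fun hm => hip (congrArg Prod.fst (hV.eq_of_snd_eq hm hp rfl))
    have hlt : f i < f p.1 := hfV p hp ▸ hflt i p.2 hD hnot
    exact Prod.Lex.toLex_lt_toLex.2 (Or.inl hlt)

end IsAlgGradient

end BasedChainComplex

open BasedChainComplex in
/-- The exhaustive reduction procedure applied to a cycle `c` terminates (there is no
infinite sequence of reduction steps starting at `c`), and any terminal result (one
containing no gradient facet) equals the stabilized flow `Φ^∞(c)`, which is the unique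
`Φ`-invariant cycle `V`-homologous to `c`. -/
theorem stmt19 {𝕜 : Type} [Field 𝕜] {l : ℕ} (C : BasedChainComplex 𝕜 l)
    (V : Finset (Fin l × Fin l)) (hV : C.IsAlgGradient V)
    (n : ℕ) (c : Fin l → 𝕜) (hc : C.IsCycle n c)
    (r : ℕ) (hr : ∀ s : ℕ, r ≤ s → (C.flow V)^[s] = (C.flow V)^[r]) :
    (¬ ∃ seq : ℕ → (Fin l → 𝕜), seq 0 = c ∧
        ∀ m : ℕ, C.redStep V (seq m) (seq (m + 1))) ∧
    (∀ c' : Fin l → 𝕜, Relation.ReflTransGen (C.redStep V) c c' →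
      (∀ p ∈ V, c' p.1 = 0) →
      c' = (C.flow V)^[r] c ∧ C.flow V c' = c' ∧
        c' - c ∈ Submodule.span 𝕜
          {x : Fin l → 𝕜 | ∃ p ∈ V, x = fun i => C.D i p.2}) := by
  refine ⟨fun ⟨seq, _, hseq⟩ => (wellFounded_iff_isEmpty_descending_chain.1
    hV.wellFounded_flip_redStep).false ⟨seq, hseq⟩, fun c' hreach hc'V => ?_⟩
  have hc' : c' - c ∈ C.gradientSpan V := sub_mem_gradientSpan_of_reflTransGen hreach
  have hz : (C.flow V)^[r] c - c ∈ C.gradientSpan V := iterate_flow_sub_mem_gradientSpan hc.1 r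
  have hzfix : C.flow V ((C.flow V)^[r] c) = (C.flow V)^[r] c := by
    rw [← Function.iterate_succ_apply' (C.flow V), hr (r + 1) r.le_succ]
  have hzV : ∀ p ∈ V, (C.flow V)^[r] c p.1 = 0 := hV.apply_fst_eq_zero_of_flow_eq_self
    (mulVec_eq_zero_of_sub_mem_gradientSpan hc.1 hz) hzfix
  refine ⟨hV.eq_of_sub_mem_gradientSpan hc'V hzV ?_,
    flow_eq_self (mulVec_eq_zero_of_sub_mem_gradientSpan hc.1 hc') hc'V, hc'⟩
  simpa only [sub_sub_sub_cancel_right] using sub_mem hc' hz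
end
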